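/- Fix real numbers a > 0 and ε > 0. Define the billiard-reflection map r : ℝ → [−a, a] as follows: r is the unique continuous map that agrees with the identity on [−a, a] and satisfies r(x) = r(2a − x) for x ≥ a and r(x) = r(−2a − x) for x ≤ −a (equivalently, r(x) = |((x + a) mod 4a) − 2a| − a). Let X be a random variable uniformly distributed on [−a, a] and let δ be a random variable uniformly distributed on [−ε, ε], independent of X. Then r(X + δ) is uniformly distributed on [−a, a]. -/

import Mathlib

/-!
The map `r` is `4a`-periodic and symmetric about `a`, so it pushes Lebesgue measure on any window
of length `4a` forward to twice Lebesgue measure on `[-a, a]`. A translate of a window is again a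
window, so the same holds for `x ↦ r (x + y)` for every `y`, and hence for `r (Y + δ)` with `Y`
Lebesgue on `[-a, 3a]` and `δ` independent of `Y`. The substitution `(x, y) ↦ (2a - x, -y)` leaves
`r (x + y)` unchanged, maps `[-a, a]` onto `[a, 3a]`, and preserves the symmetric law of `δ`; so the
two halves of `[-a, 3a]` contribute equally and each contributes Lebesgue measure on `[-a, a]`.
-/

open MeasureTheory ProbabilityTheory Set Function
open scoped ENNReal

namespace Function.Periodic

variable {α : Type*} [MeasurableSpace α] {f : ℝ → α} {T : ℝ}

theorem map_volume_restrict_Ioc_eq (hf : Periodic f T) (hT : 0 < T) (hfm : Measurable f)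
    (t s : ℝ) :
    (volume.restrict (Ioc t (t + T))).map f = (volume.restrict (Ioc s (s + T))).map f := by
  have := Fact.mk hT
  -- `f` factors through `AddCircle T`, onto whose measure every window of length `T` projects.
  have hlift : Measurable hf.lift := hfm
  have hf_eq : f = hf.lift ∘ ((↑) : ℝ → AddCircle T) := funext fun x => (hf.lift_coe x).symm
  rw [hf_eq, ← Measure.map_map hlift AddCircle.measurable_mk',
    ← Measure.map_map hlift AddCircle.measurable_mk', (AddCircle.measurePreserving_mk T t).map_eq,
    (AddCircle.measurePreserving_mk T s).map_eq]

theorem map_add_const_volume_restrict_Ioc (hf : Periodic f T) (hT : 0 < T) (hfm : Measurable f)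
    (t y : ℝ) :
    (volume.restrict (Ioc t (t + T))).map (fun x => f (x + y)) =
      (volume.restrict (Ioc t (t + T))).map f := by
  have hshift : (volume.restrict (Ioc t (t + T))).map (· + y) =
      volume.restrict (Ioc (t + y) (t + y + T)) := by
    have := (measurePreserving_add_right volume y).restrict_preimage
      (measurableSet_Ioc (a := t + y) (b := t + T + y))
    rw [preimage_add_const_Ioc, add_sub_cancel_right, add_sub_cancel_right] at this
    rw [this.map_eq, add_right_comm]
  rw [show (fun x => f (x + y)) = f ∘ (· + y) from rfl,
    ← Measure.map_map hfm (measurable_add_const y), hshift,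
    hf.map_volume_restrict_Ioc_eq hT hfm]

end Function.Periodic

theorem MeasureTheory.Measure.map_prod_eq_of_forall_map_eq {α β γ : Type*} [MeasurableSpace α]
    [MeasurableSpace β] [MeasurableSpace γ] {μ : Measure α} {ν : Measure β} [SFinite μ]
    [IsProbabilityMeasure ν] {f : α × β → γ} (hf : Measurable f) {m : Measure γ}
    (h : ∀ y, μ.map (fun x => f (x, y)) = m) :
    (μ.prod ν).map f = m := by
  ext A hA
  rw [Measure.map_apply hf hA, Measure.prod_apply_symm (hf hA)]
  have hsec : ∀ y, μ ((fun x => (x, y)) ⁻¹' (f ⁻¹' A)) = m A := fun y => by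
    rw [← h y, Measure.map_apply (by fun_prop) hA]; rfl
  simp_rw [hsec, lintegral_const, measure_univ, mul_one]

theorem Real.volume_restrict_Icc_add_Icc {a b c : ℝ} (hab : a ≤ b) (hbc : b ≤ c) :
    volume.restrict (Icc a b) + volume.restrict (Icc b c) = volume.restrict (Icc a c) := by
  simp only [← Measure.restrict_congr_set Ioc_ae_eq_Icc]
  rw [← Measure.restrict_union (Ioc_disjoint_Ioc_of_le le_rfl) measurableSet_Ioc,
    Ioc_union_Ioc_eq_Ioc hab hbc]

theorem Real.map_const_sub_volume_restrict_Icc (c a b : ℝ) :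
    (volume.restrict (Icc a b)).map (c - ·) = volume.restrict (Icc (c - b) (c - a)) := by
  have := (Measure.measurePreserving_sub_left volume c).restrict_preimage
    (measurableSet_Icc (a := c - b) (b := c - a))
  rw [preimage_const_sub_Icc, sub_sub_cancel, sub_sub_cancel] at this
  exact this.map_eq

theorem Real.map_neg_volume_restrict_Icc_neg (c : ℝ) :
    (volume.restrict (Icc (-c) c)).map Neg.neg = volume.restrict (Icc (-c) c) := by
  have := map_const_sub_volume_restrict_Icc 0 (-c) c
  rwa [zero_sub, sub_neg_eq_add, zero_add, funext zero_sub] at this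

structure IsBilliardReflection (a : ℝ) (r : ℝ → ℝ) : Prop where
  eq_self_of_mem : ∀ x ∈ Icc (-a) a, r x = x
  eq_right : ∀ x, a ≤ x → r x = r (2 * a - x)
  eq_left : ∀ x, x ≤ -a → r x = r (-(2 * a) - x)

namespace IsBilliardReflection

variable {a : ℝ} {r : ℝ → ℝ}

theorem apply_two_mul_sub (hr : IsBilliardReflection a r) (x : ℝ) : r (2 * a - x) = r x := by
  rcases le_total a x with h | h
  · exact (hr.eq_right x h).symm
  · rw [hr.eq_right _ (by linarith), sub_sub_cancel]

theorem apply_neg_two_mul_sub (hr : IsBilliardReflection a r) (x : ℝ) :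
    r (-(2 * a) - x) = r x := by
  rcases le_total x (-a) with h | h
  · exact (hr.eq_left x h).symm
  · rw [hr.eq_left _ (by linarith), sub_sub_cancel]

theorem periodic (hr : IsBilliardReflection a r) : Periodic r (4 * a) := fun x => by
  rw [← hr.apply_two_mul_sub, ← hr.apply_neg_two_mul_sub x]
  congr 1
  ring

theorem map_volume_restrict_period (hr : IsBilliardReflection a r) (ha : 0 ≤ a)
    (hrm : Measurable r) :
    (volume.restrict (Icc (-a) (3 * a))).map r = (2 : ℝ≥0∞) • volume.restrict (Icc (-a) a) := by
  have hid : (volume.restrict (Icc (-a) a)).map r = volume.restrict (Icc (-a) a) := by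
    rw [Measure.map_congr (ae_restrict_of_forall_mem measurableSet_Icc hr.eq_self_of_mem),
      Measure.map_id']
  have hfold : (volume.restrict (Icc a (3 * a))).map r = volume.restrict (Icc (-a) a) := by
    have hr_eq : ∀ x ∈ Icc a (3 * a), r x = 2 * a - x := fun x hx => by
      rw [← hr.apply_two_mul_sub, hr.eq_self_of_mem _ ⟨by linarith [hx.2], by linarith [hx.1]⟩]
    rw [Measure.map_congr (ae_restrict_of_forall_mem measurableSet_Icc hr_eq),
      Real.map_const_sub_volume_restrict_Icc]
    ring_nf
  rw [← Real.volume_restrict_Icc_add_Icc (by linarith) (by linarith),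
    Measure.map_add _ _ hrm, hid, hfold, two_smul]

theorem map_add_prod_volume_restrict_period (hr : IsBilliardReflection a r) (ha : 0 < a)
    (hrm : Measurable r) (ν : Measure ℝ) [IsProbabilityMeasure ν] :
    ((volume.restrict (Icc (-a) (3 * a))).prod ν).map (fun p => r (p.1 + p.2)) =
      (2 : ℝ≥0∞) • volume.restrict (Icc (-a) a) := by
  refine Measure.map_prod_eq_of_forall_map_eq (by fun_prop) fun y => ?_
  have h3a : 3 * a = -a + 4 * a := by ring
  rw [← Measure.restrict_congr_set Ioc_ae_eq_Icc, h3a,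
    hr.periodic.map_add_const_volume_restrict_Ioc (by linarith) hrm, ← h3a,
    Measure.restrict_congr_set Ioc_ae_eq_Icc, hr.map_volume_restrict_period ha.le hrm]

theorem map_add_prod_reflected_eq (hr : IsBilliardReflection a r) (hrm : Measurable r)
    (ν : Measure ℝ) [SFinite ν] (hν : ν.map Neg.neg = ν) :
    ((volume.restrict (Icc a (3 * a))).prod ν).map (fun p => r (p.1 + p.2)) =
      ((volume.restrict (Icc (-a) a)).prod ν).map (fun p => r (p.1 + p.2)) := by
  have hμ : (volume.restrict (Icc (-a) a)).map (2 * a - ·) = volume.restrict (Icc a (3 * a)) := by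
    rw [Real.map_const_sub_volume_restrict_Icc]; ring_nf
  have hinv : (fun p : ℝ × ℝ => r (p.1 + p.2)) ∘ Prod.map (2 * a - ·) Neg.neg =
      fun p => r (p.1 + p.2) := funext fun p => by
    change r (2 * a - p.1 + -p.2) = _
    rw [← hr.apply_two_mul_sub (p.1 + p.2)]
    congr 1
    ring
  conv_lhs => rw [← hμ, ← hν]
  rw [Measure.map_prod_map _ _ (by fun_prop) measurable_neg,
    Measure.map_map (by fun_prop) (by fun_prop), hinv]

theorem map_add_prod_volume_restrict_Icc (hr : IsBilliardReflection a r) (ha : 0 < a)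
    (hrm : Measurable r) (ν : Measure ℝ) [IsProbabilityMeasure ν] (hν : ν.map Neg.neg = ν) :
    ((volume.restrict (Icc (-a) a)).prod ν).map (fun p => r (p.1 + p.2)) =
      volume.restrict (Icc (-a) a) := by
  set T : ℝ × ℝ → ℝ := fun p => r (p.1 + p.2)
  have h2 : (2 : ℝ≥0∞) • ((volume.restrict (Icc (-a) a)).prod ν).map T =
      (2 : ℝ≥0∞) • volume.restrict (Icc (-a) a) := by
    rw [two_smul]
    nth_rewrite 2 [← hr.map_add_prod_reflected_eq hrm ν hν]
    rw [← Measure.map_add _ _ (by fun_prop), ← Measure.add_prod,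
      Real.volume_restrict_Icc_add_Icc (by linarith) (by linarith),
      hr.map_add_prod_volume_restrict_period ha hrm]
  simpa [smul_smul, ENNReal.inv_mul_cancel] using congrArg ((2 : ℝ≥0∞)⁻¹ • ·) h2

end IsBilliardReflection

theorem billiard_reflection_preserves_uniform_general
    {Ω : Type*} [MeasurableSpace Ω] (P : Measure Ω) [IsProbabilityMeasure P]
    (a ε : ℝ) (ha : 0 < a)
    (r : ℝ → ℝ)
    (hr_cont : Continuous r)
    (hr_id : ∀ x ∈ Set.Icc (-a) a, r x = x)
    (hr_right : ∀ x, a ≤ x → r x = r (2 * a - x))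
    (hr_left : ∀ x, x ≤ -a → r x = r (-(2 * a) - x))
    (X δ : Ω → ℝ) (hX : Measurable X) (hδ : Measurable δ)
    (hXδ : IndepFun X δ P)
    (hXunif : Measure.map X P =
      (ENNReal.ofReal (2 * a))⁻¹ • volume.restrict (Set.Icc (-a) a))
    (hδunif : Measure.map δ P =
      (ENNReal.ofReal (2 * ε))⁻¹ • volume.restrict (Set.Icc (-ε) ε)) :
    Measure.map (fun ω => r (X ω + δ ω)) P =
      (ENNReal.ofReal (2 * a))⁻¹ • volume.restrict (Set.Icc (-a) a) := by
  have hr : IsBilliardReflection a r := ⟨hr_id, hr_right, hr_left⟩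
  have : IsProbabilityMeasure (P.map δ) := Measure.isProbabilityMeasure_map hδ.aemeasurable
  have hδ_symm : (P.map δ).map Neg.neg = P.map δ := by
    rw [hδunif, Measure.map_smul, Real.map_neg_volume_restrict_Icc_neg]
  have hXδ_law : P.map (fun ω => (X ω, δ ω)) = (P.map X).prod (P.map δ) :=
    (indepFun_iff_map_prod_eq_prod_map_map hX.aemeasurable hδ.aemeasurable).1 hXδ
  change P.map ((fun p : ℝ × ℝ => r (p.1 + p.2)) ∘ fun ω => (X ω, δ ω)) = _
  rw [← Measure.map_map (by fun_prop) (by fun_prop),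
    hXδ_law, hXunif, Measure.prod_smul_left, Measure.map_smul,
    hr.map_add_prod_volume_restrict_Icc ha hr_cont.measurable _ hδ_symm]

/-- **Reflected uniform perturbations preserve the uniform distribution.**
Let `r : ℝ → [−a, a]` be the (unique) continuous billiard-reflection map: it agrees
with the identity on `[−a, a]`, and satisfies `r x = r (2a − x)` for `x ≥ a` and
`r x = r (−2a − x)` for `x ≤ −a`.  If `X` is uniformly distributed on `[−a, a]` and
`δ` is uniformly distributed on `[−ε, ε]`, independent of `X`, then `r (X + δ)` is
uniformly distributed on `[−a, a]`. -/
theorem billiard_reflection_preserves_uniform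
    {Ω : Type*} [MeasurableSpace Ω] (P : Measure Ω) [IsProbabilityMeasure P]
    (a ε : ℝ) (ha : 0 < a) (hε : 0 < ε)
    (r : ℝ → ℝ)
    (hr_range : ∀ x, r x ∈ Set.Icc (-a) a)
    (hr_cont : Continuous r)
    (hr_id : ∀ x ∈ Set.Icc (-a) a, r x = x)
    (hr_right : ∀ x, a ≤ x → r x = r (2 * a - x))
    (hr_left : ∀ x, x ≤ -a → r x = r (-(2 * a) - x))
    (X δ : Ω → ℝ) (hX : Measurable X) (hδ : Measurable δ)
    (hXδ : IndepFun X δ P)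
    (hXunif : Measure.map X P =
      (ENNReal.ofReal (2 * a))⁻¹ • volume.restrict (Set.Icc (-a) a))
    (hδunif : Measure.map δ P =
      (ENNReal.ofReal (2 * ε))⁻¹ • volume.restrict (Set.Icc (-ε) ε)) :
    Measure.map (fun ω => r (X ω + δ ω)) P =
      (ENNReal.ofReal (2 * a))⁻¹ • volume.restrict (Set.Icc (-a) a) :=
  billiard_reflection_preserves_uniform_general P a ε ha r hr_cont hr_id hr_right hr_left X δ hX hδ
    hXδ hXunif hδunif
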